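/- arXiv:1802.01453 — 2 statements merged into one kernel-verified Lean document; each statement's English description precedes it below -/
import Mathlib

section
/- Fix natural numbers p and q. For every finite graph G and vertex v ∈ V(G), the number of vertex sets U ⊆ V(G) such that v ∈ U, the induced subgraph G[U] is connected, |U| ≤ p, and |N(U)| ≤ q, is at most the binomial coefficient C(p+q, p). -/
/-!
Count connected sets `U` with prescribed vertices `A ⊆ U` and forbidden vertices `X`, where `U`
may have at most `p` vertices outside `A` and at most `q` neighbours outside `X`. If every
neighbour of `A` is forbidden, connectivity forces `U = A`. Otherwise pick a neighbour `w` of `A`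
outside `X`: either `w ∈ U`, and `w` moves into `A` at the cost of one unit of `p`, or `w ∉ U`,
so `w ∈ N(U)` moves into `X` at the cost of one unit of `q`. Pascal's rule then bounds the count
by `C(p + q, p)`.
-/

/-- The (open, external) neighborhood N(U): vertices outside U with a neighbor in U. -/
def SimpleGraph.extNbhd {V : Type*} [Fintype V] [DecidableEq V] (G : SimpleGraph V)
    [DecidableRel G.Adj] (U : Finset V) : Finset V :=
  Finset.univ.filter (fun v => v ∉ U ∧ ∃ u ∈ U, G.Adj u v)

namespace SimpleGraph

open Finset

variable {V : Type*} [Fintype V] [DecidableEq V] (G : SimpleGraph V) [DecidableRel G.Adj]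

variable {G} in
lemma mem_extNbhd {U : Finset V} {w : V} : w ∈ G.extNbhd U ↔ w ∉ U ∧ ∃ u ∈ U, G.Adj u w := by
  simp [extNbhd]

lemma eq_of_induce_connected_of_disjoint_extNbhd {A U : Finset V}
    (hU : (G.induce (U : Set V)).Connected) (hAU : A ⊆ U) (hA : A.Nonempty)
    (hUA : Disjoint U (G.extNbhd A)) : U = A := by
  refine Subset.antisymm (fun u hu => ?_) hAU
  obtain ⟨a, ha⟩ := hA
  by_contra huA
  obtain ⟨walk⟩ := hU ⟨a, hAU ha⟩ ⟨u, hu⟩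
  obtain ⟨d, -, hd₁, hd₂⟩ := walk.exists_boundary_dart {x | x.1 ∈ A} ha huA
  have hd : d.snd.1 ∈ G.extNbhd A := mem_extNbhd.2 ⟨hd₂, d.fst.1, hd₁, d.adj⟩
  exact Finset.disjoint_left.1 hUA d.snd.2 hd

/-- `A` collects the vertices already put into `U`, `X` those already excluded from it. -/
def connectedExtensions (A X : Finset V) (p q : ℕ) : Finset (Finset V) :=
  univ.filter fun U => A ⊆ U ∧ Disjoint U X ∧ (G.induce (U : Set V)).Connected ∧
    #(U \ A) ≤ p ∧ #(G.extNbhd U \ X) ≤ q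

section Branching

variable {G} {A X : Finset V} {p q : ℕ} {w : V}

lemma connectedExtensions_subset_singleton (hA : A.Nonempty) (hAX : G.extNbhd A ⊆ X) :
    G.connectedExtensions A X p q ⊆ {A} := by
  intro U hU
  simp only [connectedExtensions, mem_filter, mem_univ, true_and] at hU
  obtain ⟨hAU, hUX, hconn, -, -⟩ := hU
  exact mem_singleton.2 <|
    eq_of_induce_connected_of_disjoint_extNbhd G hconn hAU hA (hUX.mono_right hAX)

lemma filter_mem_connectedExtensions_succ_subset (hwA : w ∉ A) :
    (G.connectedExtensions A X (p + 1) q).filter (w ∈ ·) ⊆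
      G.connectedExtensions (insert w A) X p q := by
  intro U hU
  simp only [connectedExtensions, mem_filter, mem_univ, true_and] at hU ⊢
  obtain ⟨⟨hAU, hUX, hconn, hcard, hnb⟩, hwU⟩ := hU
  refine ⟨insert_subset hwU hAU, hUX, hconn, ?_, hnb⟩
  rw [sdiff_insert, card_erase_of_mem (mem_sdiff.2 ⟨hwU, hwA⟩)]
  omega

lemma filter_mem_connectedExtensions_zero (hwA : w ∉ A) :
    (G.connectedExtensions A X 0 q).filter (w ∈ ·) = ∅ := by
  refine filter_eq_empty_iff.2 fun U hU hwU => ?_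
  simp only [connectedExtensions, mem_filter, mem_univ, true_and] at hU
  have := card_pos.2 ⟨w, mem_sdiff.2 ⟨hwU, hwA⟩⟩
  omega

lemma mem_extNbhd_sdiff_of_notMem {U : Finset V} (hAU : A ⊆ U) (hw : w ∈ G.extNbhd A \ X)
    (hwU : w ∉ U) : w ∈ G.extNbhd U \ X := by
  obtain ⟨hwN, hwX⟩ := mem_sdiff.1 hw
  obtain ⟨-, a, ha, haw⟩ := mem_extNbhd.1 hwN
  exact mem_sdiff.2 ⟨mem_extNbhd.2 ⟨hwU, a, hAU ha, haw⟩, hwX⟩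

lemma filter_notMem_connectedExtensions_succ_subset (hw : w ∈ G.extNbhd A \ X) :
    (G.connectedExtensions A X p (q + 1)).filter (w ∉ ·) ⊆
      G.connectedExtensions A (insert w X) p q := by
  intro U hU
  simp only [connectedExtensions, mem_filter, mem_univ, true_and] at hU ⊢
  obtain ⟨⟨hAU, hUX, hconn, hcard, hnb⟩, hwU⟩ := hU
  refine ⟨hAU, disjoint_insert_right.2 ⟨hwU, hUX⟩, hconn, hcard, ?_⟩
  rw [sdiff_insert, card_erase_of_mem (mem_extNbhd_sdiff_of_notMem hAU hw hwU)]
  omega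

lemma filter_notMem_connectedExtensions_zero (hw : w ∈ G.extNbhd A \ X) :
    (G.connectedExtensions A X p 0).filter (w ∉ ·) = ∅ := by
  refine filter_eq_empty_iff.2 fun U hU hwU => ?_
  simp only [connectedExtensions, mem_filter, mem_univ, true_and] at hU
  have := card_pos.2 ⟨w, mem_extNbhd_sdiff_of_notMem hU.1 hw hwU⟩
  omega

end Branching

variable {G} in
theorem card_connectedExtensions_le {A X : Finset V} {p q : ℕ} (hA : A.Nonempty) :
    #(G.connectedExtensions A X p q) ≤ (p + q).choose p := by
  by_cases hAX : G.extNbhd A ⊆ X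
  · calc #(G.connectedExtensions A X p q) ≤ #{A} :=
          card_le_card (connectedExtensions_subset_singleton hA hAX)
      _ ≤ (p + q).choose p := Nat.choose_pos (Nat.le_add_right p q)
  obtain ⟨w, hwN, hwX⟩ := not_subset.1 hAX
  have hw : w ∈ G.extNbhd A \ X := mem_sdiff.2 ⟨hwN, hwX⟩
  have hwA : w ∉ A := (mem_extNbhd.1 hwN).1
  have hwA_nonempty : (insert w A).Nonempty := insert_nonempty w A
  rw [← card_filter_add_card_filter_not (w ∈ ·)]
  match p, q with
  | 0, 0 =>
    simp [filter_mem_connectedExtensions_zero hwA, filter_notMem_connectedExtensions_zero hw]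
  | p + 1, 0 =>
    rw [filter_notMem_connectedExtensions_zero hw, card_empty, add_zero]
    calc _ ≤ #(G.connectedExtensions (insert w A) X p 0) :=
          card_le_card (filter_mem_connectedExtensions_succ_subset hwA)
      _ ≤ (p + 0).choose p := card_connectedExtensions_le hwA_nonempty
      _ = (p + 1 + 0).choose (p + 1) := by simp
  | 0, q + 1 =>
    rw [filter_mem_connectedExtensions_zero hwA, card_empty, zero_add]
    calc _ ≤ #(G.connectedExtensions A (insert w X) 0 q) :=
          card_le_card (filter_notMem_connectedExtensions_succ_subset hw)
      _ ≤ (0 + q).choose 0 := card_connectedExtensions_le hA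
      _ = (0 + (q + 1)).choose 0 := by simp
  | p + 1, q + 1 =>
    calc _ ≤ (p + (q + 1)).choose p + (p + 1 + q).choose (p + 1) := add_le_add
          ((card_le_card (filter_mem_connectedExtensions_succ_subset hwA)).trans
            (card_connectedExtensions_le hwA_nonempty))
          ((card_le_card (filter_notMem_connectedExtensions_succ_subset hw)).trans
            (card_connectedExtensions_le hA))
      _ = (p + 1 + (q + 1)).choose (p + 1) := by
        rw [show p + 1 + (q + 1) = p + (q + 1) + 1 by omega, Nat.choose_succ_succ',
          show p + (q + 1) = p + 1 + q by omega]
termination_by p + q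

end SimpleGraph

theorem stmt_13 (p q : ℕ) {V : Type*} [Fintype V] [DecidableEq V]
    (G : SimpleGraph V) [DecidableRel G.Adj] (v : V) :
    {U : Finset V | v ∈ U ∧ (G.induce (↑U : Set V)).Connected ∧
        U.card ≤ p ∧ (G.extNbhd U).card ≤ q}.ncard ≤ Nat.choose (p + q) p := by
  have hsub : {U : Finset V | v ∈ U ∧ (G.induce (↑U : Set V)).Connected ∧
      U.card ≤ p ∧ (G.extNbhd U).card ≤ q} ⊆ G.connectedExtensions {v} ∅ p q := by
    rintro U ⟨hv, hconn, hcard, hnb⟩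
    simp only [SimpleGraph.connectedExtensions, Finset.coe_filter, Finset.mem_univ, true_and,
      Set.mem_ofPred_eq, Finset.singleton_subset_iff, Finset.disjoint_empty_right,
      Finset.sdiff_empty]
    exact ⟨hv, hconn, (Finset.card_le_card Finset.sdiff_subset).trans hcard, hnb⟩
  calc _ ≤ (G.connectedExtensions {v} ∅ p q).card :=
        (Set.ncard_le_ncard hsub (Finset.finite_toSet _)).trans_eq (Set.ncard_coe_finset _)
    _ ≤ (p + q).choose p :=
        SimpleGraph.card_connectedExtensions_le (Finset.singleton_nonempty v)
end

section
/- Let G be an (s,k)-unbreakable graph, R ⊆ E(G) with G[R] a cluster graph whose cliques have vertex sets R_1, …, R_r, and let S ⊆ V(G) \ V[R] with |S| ≤ k be such that for all u,v ∈ V[R], u and v are in the same component of (G \ S) − R iff some edge of R joins them. For each j, let C_j be the component of (G \ S) − R containing R_j. Then there is an index i such that |V(C_j)| ≤ s for all j ≠ i. -/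
/-- A separation of a graph: a pair (X,Y) of vertex sets covering V(G)
with no edge between X \ Y and Y \ X. -/
def SimpleGraph.IsSep {V : Type*} [Fintype V] [DecidableEq V] (G : SimpleGraph V)
    (X Y : Finset V) : Prop :=
  X ∪ Y = Finset.univ ∧ ∀ x ∈ X \ Y, ∀ y ∈ Y \ X, ¬ G.Adj x y

/-- A graph is (s,c)-unbreakable if it has no separation of order at most c
with both sides (minus the separator) of size greater than s. -/
def SimpleGraph.Unbreakable {V : Type*} [Fintype V] [DecidableEq V] (G : SimpleGraph V)
    (s c : ℕ) : Prop :=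
  ¬ ∃ X Y : Finset V, G.IsSep X Y ∧ (X ∩ Y).card ≤ c ∧ s < (X \ Y).card ∧ s < (Y \ X).card

/-- A cluster graph: the vertex set can be partitioned into parts such that two
distinct vertices are adjacent iff they lie in a common part (each part is a
clique, and there are no edges between distinct parts). -/
def SimpleGraph.IsClusterGraph {V : Type*} (H : SimpleGraph V) : Prop :=
  ∃ P : Set (Set V), (∀ A ∈ P, ∀ B ∈ P, A ≠ B → Disjoint A B) ∧ ⋃₀ P = Set.univ ∧
    ∀ u v : V, H.Adj u v ↔ u ≠ v ∧ ∃ A ∈ P, u ∈ A ∧ v ∈ A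

/-!
If two components `C ≠ C'` of `(G \ S) − R` were both larger than `s`, then `(V(C) ∪ S, V(G) \ V(C))`
would be a separation of order at most `|S| ≤ k` with both sides larger than `s`. It is a
separation because an `R`-edge leaving `V(C)` would, by the solution property, join two vertices
of the same component, so no edge of `G` leaves `V(C)` except towards `S`.
-/

namespace SimpleGraph

theorem Unbreakable.card_compl_le {V : Type*} [Fintype V] [DecidableEq V] {G : SimpleGraph V}
    {s k : ℕ} (hG : G.Unbreakable s k) {A S : Finset V} (hSk : S.card ≤ k)
    (hA : ∀ x ∈ A, ∀ y, G.Adj x y → y ∈ A ∪ S) (hsA : s < A.card) :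
    (A ∪ S)ᶜ.card ≤ s := by
  by_contra! h
  refine hG ⟨A ∪ S, Aᶜ, ⟨?_, ?_⟩, ?_, ?_, ?_⟩
  · ext v
    simp only [Finset.mem_union, Finset.mem_compl, Finset.mem_univ, iff_true]
    tauto
  · intro x hx y hy hxy
    simp only [Finset.mem_sdiff, Finset.mem_union, Finset.mem_compl, not_not] at hx hy
    exact hy.2 (Finset.mem_union.1 (hA x hx.2 y hxy))
  · refine le_trans (Finset.card_le_card fun v hv => ?_) hSk
    simp only [Finset.mem_inter, Finset.mem_union, Finset.mem_compl] at hv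
    tauto
  · rwa [show (A ∪ S) \ Aᶜ = A by ext; simp]
  · rwa [show Aᶜ \ (A ∪ S) = (A ∪ S)ᶜ by ext; simp]

theorem ConnectedComponent.mem_supp_of_adj_of_deleteEdges_reachable {V : Type*}
    {G : SimpleGraph V} {R : Set (Sym2 V)} {W : Set V}
    (hR : ∀ u v : W, s((u : V), (v : V)) ∈ R → ((G.deleteEdges R).induce W).Reachable u v)
    {C : ((G.deleteEdges R).induce W).ConnectedComponent} {x : W} (hx : x ∈ C.supp)
    {y : V} (hy : y ∈ W) (hxy : G.Adj x y) : ⟨y, hy⟩ ∈ C.supp := by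
  have hreach : ((G.deleteEdges R).induce W).Reachable x ⟨y, hy⟩ := by
    by_cases hxyR : s((x : V), y) ∈ R
    · exact hR x ⟨y, hy⟩ hxyR
    · exact Adj.reachable (by simpa using ⟨hxy, hxyR⟩)
  rw [ConnectedComponent.mem_supp_iff, ← ConnectedComponent.sound hreach]
  exact hx

end SimpleGraph

theorem stmt_18_general {V : Type*} [Fintype V] [DecidableEq V] (G : SimpleGraph V) (s k : ℕ)
    (hG : G.Unbreakable s k) (R : Set (Sym2 V))
    (S : Finset V) (hSk : S.card ≤ k)
    -- S is a solution: two distinct vertices of V[R] lie in the same connected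
    -- component of (G \ S) − R iff some edge of R has them as its endpoints
    (hsol : ∀ u v : ↥((↑S : Set V)ᶜ), (u : V) ≠ (v : V) →
      (∃ e ∈ R, (u : V) ∈ e) → (∃ e ∈ R, (v : V) ∈ e) →
      (((G.deleteEdges R).induce ((↑S : Set V)ᶜ)).Reachable u v ↔
        s((u : V), (v : V)) ∈ R)) :
    -- at most one connected component of (G \ S) − R containing a vertex of V[R]
    -- has more than s vertices
    ∀ C C' : ((G.deleteEdges R).induce ((↑S : Set V)ᶜ)).ConnectedComponent,
      (∃ u ∈ Subtype.val '' C.supp, ∃ e ∈ R, u ∈ e) →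
      (∃ u ∈ Subtype.val '' C'.supp, ∃ e ∈ R, u ∈ e) →
      s < C.supp.ncard → s < C'.supp.ncard → C = C' := by
  classical
  intro C C' _ _ hs hs'
  by_contra hne
  have hRreach : ∀ u v : ↥((↑S : Set V)ᶜ), s((u : V), (v : V)) ∈ R →
      ((G.deleteEdges R).induce ((↑S : Set V)ᶜ)).Reachable u v := by
    intro u v huv
    rcases eq_or_ne (u : V) v with h | h
    · exact Subtype.ext h ▸ SimpleGraph.Reachable.refl u
    · exact (hsol u v h ⟨_, huv, Sym2.mem_mk_left _ _⟩ ⟨_, huv, Sym2.mem_mk_right _ _⟩).2 huv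
  have card_eq (D : ((G.deleteEdges R).induce ((↑S : Set V)ᶜ)).ConnectedComponent) :
      (Subtype.val '' D.supp).toFinset.card = D.supp.ncard := by
    rw [← Set.ncard_eq_toFinset_card', Set.ncard_image_of_injective _ Subtype.val_injective]
  set A := (Subtype.val '' C.supp).toFinset
  have hAclosed : ∀ x ∈ A, ∀ y, G.Adj x y → y ∈ A ∪ S := by
    rintro _ hx y hxy
    obtain ⟨x, hxC, rfl⟩ := Set.mem_toFinset.1 hx
    by_cases hyS : y ∈ S
    · exact Finset.mem_union_right _ hyS
    · exact Finset.mem_union_left _ <| Set.mem_toFinset.2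
        ⟨_, SimpleGraph.ConnectedComponent.mem_supp_of_adj_of_deleteEdges_reachable
          hRreach hxC hyS hxy, rfl⟩
  have hA'sub : (Subtype.val '' C'.supp).toFinset ⊆ (A ∪ S)ᶜ := by
    intro _ hy
    obtain ⟨y, hyC', rfl⟩ := Set.mem_toFinset.1 hy
    simp only [Finset.mem_compl, Finset.mem_union, not_or]
    refine ⟨fun hyA => hne ?_, y.2⟩
    obtain ⟨x, hxC, hxy⟩ := Set.mem_toFinset.1 hyA
    rw [← hxC, ← hyC', Subtype.ext hxy]
  have hsmall := (Finset.card_le_card hA'sub).trans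
    (hG.card_compl_le hSk hAclosed (by rwa [card_eq]))
  rw [card_eq] at hsmall
  omega

theorem stmt_18 {V : Type*} [Fintype V] [DecidableEq V] (G : SimpleGraph V) (s k : ℕ)
    (hG : G.Unbreakable s k) (R : Set (Sym2 V)) (hR : R ⊆ G.edgeSet)
    (hclust : (SimpleGraph.fromEdgeSet R).IsClusterGraph)
    (S : Finset V) (hSk : S.card ≤ k) (hS : ∀ v ∈ S, ¬ ∃ e ∈ R, v ∈ e)
    -- S is a solution: two distinct vertices of V[R] lie in the same connected
    -- component of (G \ S) − R iff some edge of R has them as its endpoints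
    (hsol : ∀ u v : ↥((↑S : Set V)ᶜ), (u : V) ≠ (v : V) →
      (∃ e ∈ R, (u : V) ∈ e) → (∃ e ∈ R, (v : V) ∈ e) →
      (((G.deleteEdges R).induce ((↑S : Set V)ᶜ)).Reachable u v ↔
        s((u : V), (v : V)) ∈ R)) :
    -- at most one connected component of (G \ S) − R containing a vertex of V[R]
    -- has more than s vertices
    ∀ C C' : ((G.deleteEdges R).induce ((↑S : Set V)ᶜ)).ConnectedComponent,
      (∃ u ∈ Subtype.val '' C.supp, ∃ e ∈ R, u ∈ e) →
      (∃ u ∈ Subtype.val '' C'.supp, ∃ e ∈ R, u ∈ e) →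
      s < C.supp.ncard → s < C'.supp.ncard → C = C' :=
  stmt_18_general G s k hG R S hSk hsol
end
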